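/- arXiv:1608.08500 — 5 statements merged into one kernel-verified Lean document; each statement's English description precedes it below -/
import Mathlib

section
/- Let s < t be real numbers and let agents i = 1,…,k have positions p_i ∈ ℝ and budgets B_i ≥ 0. Define l_i = p_i − B_i/2 and r_i = p_i + B_i/2. Then there exist closed intervals I_i, each of length at most B_i/2 and with I_i ⊆ [l_i, r_i], whose union covers [s,t], if and only if the returning budgeted delivery problem on the line is solvable, i.e., there is a finite sequence of agents where each carries the message over an interval of total walking length (from p_i to pickup, to drop-off, back to p_i) at most B_i and the carried intervals cover [s,t] in order from s to t. -/
/-!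
A single carry from `x` to `y` costs an agent based at `p` exactly
`2 (max y p - min x p)`, so it is affordable with budget `B` iff `[x, y]` has length at most
`B / 2` and lies in `[p - B / 2, p + B / 2]`. Hence the carried pieces of a delivery are
admissible intervals, and conversely a cover by admissible intervals yields a delivery: the agent
whose interval contains `s` carries the message to the end of its interval, and the remaining
intervals cover the rest, handover point included, because a finite union of closed intervals is
closed.
-/

open Set Function

def tripLength (p x y : ℝ) : ℝ := |p - x| + (y - x) + |y - p|

theorem tripLength_le_iff {p x y B : ℝ} (hxy : x ≤ y) :
    tripLength p x y ≤ B ↔ y - x ≤ B / 2 ∧ Icc x y ⊆ Icc (p - B / 2) (p + B / 2) := by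
  rw [Icc_subset_Icc_iff hxy, tripLength]
  constructor
  · intro h
    refine ⟨?_, ?_, ?_⟩ <;> cases abs_cases (p - x) <;> cases abs_cases (y - p) <;> linarith
  · rintro ⟨hlen, hx, hy⟩
    cases abs_cases (p - x) <;> cases abs_cases (y - p) <;> linarith

theorem Fin.exists_castSucc_le_le_succ {α : Type*} [LinearOrder α] {n : ℕ}
    (c : Fin (n + 1) → α) (hne : c 0 ≠ c (Fin.last n)) {z : α}
    (hz : z ∈ Icc (c 0) (c (Fin.last n))) :
    ∃ j : Fin n, c j.castSucc ≤ z ∧ z ≤ c j.succ := by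
  obtain _ | n := n
  · exact absurd rfl hne
  by_contra! h
  have hlt : ∀ j : Fin (n + 1), c j.succ < z := by
    intro j
    induction j using Fin.induction with
    | zero => exact h 0 hz.1
    | succ j ih => exact h j.succ (by rw [← Fin.succ_castSucc]; exact ih.le)
  exact (hlt (Fin.last n)).not_ge (by simpa using hz.2)

/- Covering only the open interval makes `s = t` trivial and lets the recursion restart at
`min (b i) t` whether or not the first interval reaches `t`. -/
theorem exists_relay_of_Ioo_subset_biUnion {ι : Type*} (a b : ι → ℝ) (t : ℝ) (S : Finset ι) :
    ∀ s ≤ t, Ioo s t ⊆ ⋃ i ∈ S, Icc (a i) (b i) →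
      ∃ (ℓ : ℕ) (g : Fin ℓ → ι) (c : Fin (ℓ + 1) → ℝ),
        Injective g ∧ (∀ j, g j ∈ S) ∧ c 0 = s ∧ c (Fin.last ℓ) = t ∧
        ∀ j, a (g j) ≤ c j.castSucc ∧ c j.castSucc ≤ c j.succ ∧ c j.succ ≤ b (g j) := by
  classical
  induction S using Finset.strongInduction with
  | H S ih =>
  intro s hst hcov
  rcases hst.eq_or_lt with rfl | hst
  · exact ⟨0, Fin.elim0, fun _ => s, injective_of_subsingleton _, fun j => j.elim0, rfl, rfl,
      fun j => j.elim0⟩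
  have hclosed : IsClosed (⋃ i ∈ S, Icc (a i) (b i)) :=
    isClosed_biUnion_finset fun i _ => isClosed_Icc
  obtain ⟨i, hiS, hai, hbi⟩ := mem_iUnion₂.1 <|
    hclosed.closure_subset_iff.2 hcov (closure_Ioo hst.ne ▸ left_mem_Icc.2 hst.le)
  set u := min (b i) t
  have hcov' : Ioo u t ⊆ ⋃ i' ∈ S.erase i, Icc (a i') (b i') := by
    intro z hz
    have hbz : b i < z := (min_lt_iff.1 hz.1).resolve_right hz.2.not_gt
    obtain ⟨i', hi'S, hz'⟩ := mem_iUnion₂.1 (hcov ⟨hbi.trans_lt hbz, hz.2⟩)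
    refine mem_iUnion₂.2 ⟨i', Finset.mem_erase.2 ⟨?_, hi'S⟩, hz'⟩
    rintro rfl
    exact hz'.2.not_gt hbz
  obtain ⟨ℓ, g, c, hg, hgS, hc0, hcl, hcarry⟩ :=
    ih _ (Finset.erase_ssubset hiS) u (min_le_right _ _) hcov'
  refine ⟨ℓ + 1, Fin.cons i g, Fin.cons s c, ?_, ?_, rfl, ?_, ?_⟩
  · exact Fin.cons_injective_iff.2 ⟨fun ⟨j, hj⟩ => (Finset.mem_erase.1 (hgS j)).1 hj, hg⟩
  · exact Fin.cases hiS fun j => Finset.mem_of_mem_erase (hgS j)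
  · rw [← Fin.succ_last, Fin.cons_succ, hcl]
  · refine Fin.cases ?_ fun j => ?_
    · simp only [Fin.cons_zero, Fin.castSucc_zero, Fin.cons_succ, hc0]
      exact ⟨hai, le_min hbi hst.le, min_le_left _ _⟩
    · simpa only [← Fin.succ_castSucc, Fin.cons_succ] using hcarry j

theorem exists_intervals_of_relay {ι : Type*} {ℓ : ℕ} (p B : ι → ℝ) (hB : ∀ i, 0 ≤ B i)
    {g : Fin ℓ → ι} (hg : Injective g) {c : Fin (ℓ + 1) → ℝ}
    (hmono : ∀ j : Fin ℓ, c j.castSucc ≤ c j.succ)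
    (htrip : ∀ j : Fin ℓ, tripLength (p (g j)) (c j.castSucc) (c j.succ) ≤ B (g j)) :
    ∃ a b : ι → ℝ,
      (∀ i, a i ≤ b i ∧ b i - a i ≤ B i / 2 ∧
        Icc (a i) (b i) ⊆ Icc (p i - B i / 2) (p i + B i / 2)) ∧
      ∀ j, a (g j) = c j.castSucc ∧ b (g j) = c j.succ := by
  refine ⟨extend g (fun j => c j.castSucc) p, extend g (fun j => c j.succ) p, fun i => ?_,
    fun j => ⟨hg.extend_apply _ _ _, hg.extend_apply _ _ _⟩⟩
  by_cases hi : ∃ j, g j = i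
  · obtain ⟨j, rfl⟩ := hi
    simp only [hg.extend_apply]
    exact ⟨hmono j, (tripLength_le_iff (hmono j)).1 (htrip j)⟩
  · simp only [extend_apply' _ _ _ hi, le_refl, sub_self, true_and]
    refine ⟨by linarith [hB i], Icc_subset_Icc ?_ ?_⟩ <;> linarith [hB i]

/-- Equivalence of the covering formulation and the returning
budgeted delivery problem on the line: there are closed intervals `I i = [a i, b i]`
of length at most `B i / 2`, contained in `[p i - B i / 2, p i + B i / 2]`, whose
union covers `[s, t]`, if and only if there is a finite sequence of (distinct) agents
carrying the message over consecutive intervals from `s` to `t`, each within its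
walking budget `B i` (walk from `p i` to the pickup, to the drop-off, back to `p i`). -/
theorem returning_delivery_line_iff_cover
    (k : ℕ) (s t : ℝ) (hst : s < t) (p B : Fin k → ℝ) (hB : ∀ i, 0 ≤ B i) :
    (∃ a b : Fin k → ℝ,
        (∀ i, a i ≤ b i) ∧
        (∀ i, b i - a i ≤ B i / 2) ∧
        (∀ i, Set.Icc (a i) (b i) ⊆ Set.Icc (p i - B i / 2) (p i + B i / 2)) ∧
        Set.Icc s t ⊆ ⋃ i, Set.Icc (a i) (b i))
    ↔
    (∃ (ℓ : ℕ) (g : Fin ℓ → Fin k) (c : Fin (ℓ + 1) → ℝ),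
        Function.Injective g ∧
        c 0 = s ∧ c (Fin.last ℓ) = t ∧
        (∀ j : Fin ℓ, c j.castSucc ≤ c j.succ) ∧
        (∀ j : Fin ℓ,
          |p (g j) - c j.castSucc| + (c j.succ - c j.castSucc) + |c j.succ - p (g j)|
            ≤ B (g j))) := by
  constructor
  · rintro ⟨a, b, -, hlen, hsub, hcov⟩
    obtain ⟨ℓ, g, c, hg, -, hc0, hcl, hcarry⟩ :=
      exists_relay_of_Ioo_subset_biUnion a b t Finset.univ s hst.le
        (by simpa using Ioo_subset_Icc_self.trans hcov)
    refine ⟨ℓ, g, c, hg, hc0, hcl, fun j => (hcarry j).2.1, fun j => ?_⟩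
    obtain ⟨hax, hxy, hyb⟩ := hcarry j
    refine (tripLength_le_iff hxy).2 ⟨?_, (Icc_subset_Icc hax hyb).trans (hsub (g j))⟩
    linarith [hlen (g j)]
  · rintro ⟨ℓ, g, c, hg, hc0, hcl, hmono, htrip⟩
    obtain ⟨a, b, hab, hgab⟩ := exists_intervals_of_relay p B hB hg hmono htrip
    refine ⟨a, b, fun i => (hab i).1, fun i => (hab i).2.1, fun i => (hab i).2.2, fun z hz => ?_⟩
    obtain ⟨j, hj⟩ := Fin.exists_castSucc_le_le_succ c (by rw [hc0, hcl]; exact hst.ne)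
      (by rwa [hc0, hcl])
    exact mem_iUnion.2 ⟨g j, by rwa [(hgab j).1, (hgab j).2]⟩
end

section
/- Let s < t be reals and for each i in a finite index set let l_i ≤ r_i with r_i − l_i ≤ B_i (where the agent covers an interval of length B_i/2 inside [l_i, r_i], so r_i − l_i ≤ B_i means each chosen interval of length B_i/2 covers at least half of [l_i, r_i]). The greedy algorithm that, starting from s_1 = s, repeatedly among all agents i with l_i ≤ s_r < r_i picks the one with smallest r_i, sets s_{r+1} = min(r_i, s_r + B_i/2), and places I_i = [s_{r+1} − B_i/2, s_{r+1}], succeeds in covering [s,t] (i.e., reaches some s_r ≥ t) if and only if a cover of [s,t] by intervals I_i of length B_i/2 with I_i ⊆ [l_i, r_i] exists. -/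
open Finset

section GreedyAux

variable {k : ℕ}

/-- Auxiliary predicate: there is a greedy run starting at `x`, using only agents
in `U`, that reaches a point `≥ t`. -/
def GreedyAux (t : ℝ) (l r B : Fin k → ℝ) (U : Finset (Fin k)) (x : ℝ) : Prop :=
  ∃ (n : ℕ) (g : Fin n → Fin k) (pts : Fin (n + 1) → ℝ),
    Function.Injective g ∧
    pts 0 = x ∧
    t ≤ pts (Fin.last n) ∧
    (∀ j : Fin n, pts j.castSucc < t) ∧
    (∀ j : Fin n, g j ∈ U) ∧
    (∀ j : Fin n,
      l (g j) ≤ pts j.castSucc ∧ pts j.castSucc < r (g j) ∧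
      (∀ i' ∈ U, (∀ j' : Fin n, j'.val < j.val → g j' ≠ i') →
        l i' ≤ pts j.castSucc → pts j.castSucc < r i' → r (g j) ≤ r i') ∧
      pts j.succ = min (r (g j)) (pts j.castSucc + B (g j) / 2))

lemma greedyAux_of_cover (t : ℝ) (l r B : Fin k → ℝ)
    (hB : ∀ i, 0 ≤ B i) (hr : ∀ i, r i = l i + B i) :
    ∀ (U : Finset (Fin k)) (x : ℝ) (a : Fin k → ℝ),
      (∀ i, l i ≤ a i ∧ a i + B i / 2 ≤ r i) →
      (Set.Ioc x t ⊆ ⋃ i ∈ U, Set.Icc (a i) (a i + B i / 2)) →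
      GreedyAux t l r B U x := by
  intro U
  induction U using Finset.strongInduction with
  | _ U ih =>
  intro x a ha hcov
  by_cases hxt : t ≤ x
  · exact ⟨0, Fin.elim0, fun _ => x, fun j => j.elim0, rfl, hxt,
      fun j => j.elim0, fun j => j.elim0, fun j => j.elim0⟩
  push_neg at hxt
  -- find an agent i₁ ∈ U with a i₁ ≤ x < a i₁ + B i₁ / 2
  classical
  set T : Finset ℝ := insert t ((U.filter (fun i => x < a i)).image a) with hT
  have hTne : T.Nonempty := ⟨t, mem_insert_self _ _⟩
  have hxy₀ : x < T.min' hTne := by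
    rw [Finset.lt_min'_iff]
    intro y hy
    rcases Finset.mem_insert.1 hy with h | h
    · exact h ▸ hxt
    · rcases Finset.mem_image.1 h with ⟨i, hi, rfl⟩
      exact (Finset.mem_filter.1 hi).2
  set y₀ := T.min' hTne with hy₀
  have hy₀t : y₀ ≤ t := Finset.min'_le _ _ (mem_insert_self _ _)
  set y : ℝ := (x + y₀) / 2 with hy
  have hxy : x < y := by simp only [hy]; linarith
  have hyy₀ : y < y₀ := by simp only [hy]; linarith
  have hyIoc : y ∈ Set.Ioc x t := ⟨hxy, by linarith⟩
  obtain ⟨i₁, hi₁U, hi₁y⟩ := Set.mem_iUnion₂.1 (hcov hyIoc)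
  rw [Set.mem_Icc] at hi₁y
  have hai₁ : a i₁ ≤ x := by
    by_contra hc
    push_neg at hc
    have : a i₁ ∈ T := Finset.mem_insert_of_mem
      (Finset.mem_image_of_mem a (Finset.mem_filter.2 ⟨hi₁U, hc⟩))
    have := Finset.min'_le _ _ this
    linarith [hi₁y.1]
  have hxr₁ : x < r i₁ := lt_of_lt_of_le (lt_of_lt_of_le hxy hi₁y.2) (ha i₁).2
  have hl₁ : l i₁ ≤ x := le_trans (ha i₁).1 hai₁
  -- greedy pick: the applicable agent with smallest r
  set A : Finset (Fin k) := U.filter (fun i => l i ≤ x ∧ x < r i) with hA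
  have hAne : A.Nonempty := ⟨i₁, Finset.mem_filter.2 ⟨hi₁U, hl₁, hxr₁⟩⟩
  obtain ⟨i₀, hi₀A, hi₀min⟩ := Finset.exists_min_image A r hAne
  obtain ⟨hi₀U, hl₀, hxr₀⟩ : i₀ ∈ U ∧ l i₀ ≤ x ∧ x < r i₀ := by
    have := Finset.mem_filter.1 hi₀A
    exact ⟨this.1, this.2.1, this.2.2⟩
  have hB₀pos : 0 < B i₀ := by have := hr i₀; linarith
  set x' : ℝ := min (r i₀) (x + B i₀ / 2) with hx'
  have hxx' : x < x' := lt_min hxr₀ (by linarith)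
  have hr₀₁ : r i₀ ≤ r i₁ := hi₀min i₁ (Finset.mem_filter.2 ⟨hi₁U, hl₁, hxr₁⟩)
  -- key inequality
  have hkey : a i₀ + B i₀ / 2 ≤ x' + B i₁ / 2 := by
    rcases min_cases (r i₀) (x + B i₀ / 2) with ⟨h1, h2⟩ | ⟨h1, h2⟩ <;>
      rw [hx', h1]
    · linarith [(ha i₀).2, hB i₁]
    · rcases le_total (B i₀) (B i₁) with hbb | hbb
      · have : a i₀ ≤ l i₀ + B i₀ / 2 := by have := (ha i₀).2; have := hr i₀; linarith
        linarith
      · have : r i₀ ≤ x + B i₁ := by have := hr i₁; linarith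
        linarith [(ha i₀).2]
  -- the modified cover
  set a' : Fin k → ℝ := Function.update a i₁ (max (a i₁) (a i₀ + B i₀ / 2 - B i₁ / 2)) with ha'
  have ha'i₁ : a' i₁ = max (a i₁) (a i₀ + B i₀ / 2 - B i₁ / 2) := Function.update_self _ _ _
  have ha'ne : ∀ i, i ≠ i₁ → a' i = a i := fun i hi => Function.update_of_ne hi _ _
  have ha'le : a' i₁ ≤ x' := by
    rw [ha'i₁]
    exact max_le (le_trans hai₁ hxx'.le) (by linarith)
  have ha'c : ∀ i, l i ≤ a' i ∧ a' i + B i / 2 ≤ r i := by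
    intro i
    by_cases hi : i = i₁
    · subst hi
      rw [ha'i₁]
      constructor
      · exact le_trans (ha i).1 (le_max_left _ _)
      · rcases max_cases (a i) (a i₀ + B i₀ / 2 - B i / 2) with ⟨h, -⟩ | ⟨h, -⟩ <;>
          rw [h]
        · exact (ha i).2
        · linarith [(ha i₀).2, hr₀₁]
    · rw [ha'ne i hi]; exact ha i
  have hcov' : Set.Ioc x' t ⊆ ⋃ i ∈ U.erase i₀, Set.Icc (a' i) (a' i + B i / 2) := by
    intro z hz
    have hzx : z ∈ Set.Ioc x t := ⟨lt_trans hxx' hz.1, hz.2⟩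
    obtain ⟨i, hiU, hiz⟩ := Set.mem_iUnion₂.1 (hcov hzx)
    rw [Set.mem_Icc] at hiz
    simp only [Set.mem_iUnion, Set.mem_Icc]
    by_cases hii : i = i₀ ∨ i = i₁
    · -- use i₁, provided i₁ ≠ i₀
      have hi₁ne : i₁ ≠ i₀ := by
        intro h
        have hii0 : i = i₀ := by
          rcases hii with rfl | rfl
          · rfl
          · exact h
        subst hii0
        have hax : a i ≤ x := h ▸ hai₁
        have : z ≤ x' := le_trans hiz.2 (le_min (ha i).2 (by linarith))
        linarith [hz.1]
      refine ⟨i₁, Finset.mem_erase.2 ⟨hi₁ne, hi₁U⟩, le_trans ha'le hz.1.le, ?_⟩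
      rw [ha'i₁]
      rcases hii with rfl | rfl
      · calc z ≤ a i + B i / 2 := hiz.2
          _ ≤ max (a i₁) (a i + B i / 2 - B i₁ / 2) + B i₁ / 2 := by
              linarith [le_max_right (a i₁) (a i + B i / 2 - B i₁ / 2)]
      · calc z ≤ a i + B i / 2 := hiz.2
          _ ≤ max (a i) (a i₀ + B i₀ / 2 - B i / 2) + B i / 2 := by
              linarith [le_max_left (a i) (a i₀ + B i₀ / 2 - B i / 2)]
    · push_neg at hii
      exact ⟨i, Finset.mem_erase.2 ⟨hii.1, hiU⟩, by rw [ha'ne i hii.2]; exact hiz.1,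
        by rw [ha'ne i hii.2]; exact hiz.2⟩
  -- apply IH
  obtain ⟨n, g, pts, hginj, hpts0, hptslast, hptslt, hgU, hgcond⟩ :=
    ih (U.erase i₀) (Finset.erase_ssubset hi₀U) x' a' ha'c hcov'
  refine ⟨n + 1, Fin.cons i₀ g, Fin.cons x pts, ?_, rfl, ?_, ?_, ?_, ?_⟩
  · rw [Fin.cons_injective_iff]
    refine ⟨?_, hginj⟩
    rintro ⟨j, hj⟩
    exact (Finset.mem_erase.1 (hgU j)).1 hj
  · rw [← Fin.succ_last, Fin.cons_succ]; exact hptslast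
  · intro j
    refine Fin.cases ?_ ?_ j
    · simpa using hxt
    · intro j₀
      rw [← Fin.succ_castSucc, Fin.cons_succ]
      exact hptslt j₀
  · intro j
    refine Fin.cases ?_ ?_ j
    · exact hi₀U
    · intro j₀
      rw [Fin.cons_succ]
      exact Finset.mem_of_mem_erase (hgU j₀)
  · intro j
    refine Fin.cases ?_ ?_ j
    · refine ⟨by simpa using hl₀, by simpa using hxr₀, ?_, ?_⟩
      · intro i' hi'U _ hli' hxi'
        simp only [Fin.castSucc_zero, Fin.cons_zero] at hli' hxi' ⊢
        exact hi₀min i' (Finset.mem_filter.2 ⟨hi'U, hli', hxi'⟩)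
      · simp only [Fin.cons_succ, Fin.cons_zero, Fin.castSucc_zero]
        rw [hpts0]
    · intro j₀
      obtain ⟨h1, h2, h3, h4⟩ := hgcond j₀
      rw [Fin.cons_succ, ← Fin.succ_castSucc, Fin.cons_succ]
      refine ⟨h1, h2, ?_, ?_⟩
      · intro i' hi'U hne hli' hxi'
        have hne0 : i₀ ≠ i' := by
          have := hne 0 (by simp)
          simpa using this
        refine h3 i' (Finset.mem_erase.2 ⟨fun h => hne0 h.symm, hi'U⟩) ?_ hli' hxi'
        intro j' hj'
        have := hne j'.succ (by simpa using Nat.succ_lt_succ hj')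
        simpa using this
      · exact h4

end GreedyAux

/-- Correctness of the greedy algorithm for the covering problem:
starting from `s₁ = s`, greedy repeatedly picks, among all unused agents `i` with
`l i ≤ s_r < r i`, one with smallest `r i`, sets `s_{r+1} = min (r i) (s_r + B i / 2)`
and places `I i = [s_{r+1} - B i / 2, s_{r+1}]`.  Some greedy run reaches a point
`≥ t` if and only if a cover of `[s, t]` by intervals `I i` of length `B i / 2`
with `I i ⊆ [l i, r i]` exists. -/
theorem greedy_succeeds_iff_cover_exists
    (k : ℕ) (s t : ℝ) (hst : s < t) (l r B : Fin k → ℝ)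
    (hB : ∀ i, 0 ≤ B i) (hr : ∀ i, r i = l i + B i) :
    (∃ (n : ℕ) (g : Fin n → Fin k) (pts : Fin (n + 1) → ℝ),
        Function.Injective g ∧
        pts 0 = s ∧
        t ≤ pts (Fin.last n) ∧
        (∀ j : Fin n, pts j.castSucc < t) ∧
        (∀ j : Fin n,
          l (g j) ≤ pts j.castSucc ∧ pts j.castSucc < r (g j) ∧
          (∀ i' : Fin k, (∀ j' : Fin n, j'.val < j.val → g j' ≠ i') →
            l i' ≤ pts j.castSucc → pts j.castSucc < r i' → r (g j) ≤ r i') ∧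
          pts j.succ = min (r (g j)) (pts j.castSucc + B (g j) / 2)))
    ↔
    (∃ a : Fin k → ℝ,
        (∀ i, l i ≤ a i ∧ a i + B i / 2 ≤ r i) ∧
        Set.Icc s t ⊆ ⋃ i, Set.Icc (a i) (a i + B i / 2)) := by
  classical
  constructor
  · rintro ⟨n, g, pts, hginj, hpts0, hptslast, hptslt, hsteps⟩
    have hchain : ∀ j : Fin n, pts j.succ ≤ pts j.castSucc + B (g j) / 2 := by
      intro j
      rw [(hsteps j).2.2.2]
      exact min_le_right _ _
    have hmono : ∀ j : Fin n, pts j.castSucc ≤ pts j.succ := by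
      intro j
      rw [(hsteps j).2.2.2]
      exact le_min (hsteps j).2.1.le (by linarith [hB (g j)])
    set a : Fin k → ℝ := fun i =>
      if h : ∃ j, g j = i then pts (h.choose).succ - B i / 2 else l i with ha
    have haused : ∀ j : Fin n, a (g j) = pts j.succ - B (g j) / 2 := by
      intro j
      have hex : ∃ j', g j' = g j := ⟨j, rfl⟩
      have : hex.choose = j := hginj hex.choose_spec
      simp only [ha, dif_pos hex, this]
    refine ⟨a, ?_, ?_⟩
    · intro i
      by_cases h : ∃ j, g j = i
      · obtain ⟨j, rfl⟩ := h
        rw [haused j]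
        have h4 := (hsteps j).2.2.2
        constructor
        · have h5 : l (g j) + B (g j) / 2 ≤ pts j.succ := by
            rw [h4]
            exact le_min (by linarith [hr (g j), hB (g j)]) (by linarith [(hsteps j).1])
          linarith
        · rw [h4]; linarith [min_le_left (r (g j)) (pts j.castSucc + B (g j) / 2)]
      · simp only [ha, dif_neg h]
        exact ⟨le_refl _, by linarith [hr i, hB i]⟩
    · intro x hx
      obtain ⟨hsx, hxt⟩ := hx
      -- find a step interval containing x
      have key : ∀ m : ℕ, (hm : m ≤ n) →
          pts ⟨m, Nat.lt_succ_of_le hm⟩ ≤ x ∨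
          ∃ j : Fin n, pts j.castSucc ≤ x ∧ x ≤ pts j.succ := by
        intro m
        induction m with
        | zero => intro _; left; exact le_of_eq_of_le (congrArg pts rfl ▸ hpts0) hsx
        | succ m ih =>
          intro hm
          rcases ih (Nat.le_of_succ_le hm) with h | h
          · rcases le_total (pts ⟨m + 1, Nat.lt_succ_of_le hm⟩) x with h2 | h2
            · left; exact h2
            · right
              refine ⟨⟨m, hm⟩, ?_, ?_⟩
              · exact le_of_eq_of_le (congrArg pts (Fin.ext rfl)) h
              · exact le_of_le_of_eq h2 (congrArg pts (Fin.ext rfl))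
          · right; exact h
      have hfind : ∃ j : Fin n, pts j.castSucc ≤ x ∧ x ≤ pts j.succ := by
        rcases key n le_rfl with h | h
        · -- pts last ≤ x, so x = t and n > 0
          have hlast' : pts (Fin.last n) ≤ x := le_of_eq_of_le (congrArg pts rfl) h
          have hn : 0 < n := by
            rcases Nat.eq_zero_or_pos n with rfl | hn
            · exfalso
              have : pts (Fin.last 0) = s := by
                rw [← hpts0]; rfl
              rw [this] at hptslast
              linarith
            · exact hn
          refine ⟨⟨n - 1, by omega⟩, ?_, ?_⟩
          · exact le_of_lt (lt_of_lt_of_le (hptslt _) (le_trans hptslast hlast'))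
          · have : (⟨n - 1, by omega⟩ : Fin n).succ = Fin.last n := Fin.ext (by simp; omega)
            rw [this]
            linarith
        · exact h
      obtain ⟨j, hj1, hj2⟩ := hfind
      refine Set.mem_iUnion.2 ⟨g j, Set.mem_Icc.2 ⟨?_, ?_⟩⟩
      · rw [haused j]; linarith [hchain j]
      · rw [haused j]; linarith
  · rintro ⟨a, ha, hcov⟩
    obtain ⟨n, g, pts, hginj, hpts0, hptslast, hptslt, hgU, hgcond⟩ :=
      greedyAux_of_cover t l r B hB hr Finset.univ s a ha
        (fun z hz => by
          obtain ⟨i, hi⟩ := Set.mem_iUnion.1 (hcov ⟨hz.1.le, hz.2⟩)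
          exact Set.mem_iUnion₂.2 ⟨i, Finset.mem_univ i, hi⟩)
    refine ⟨n, g, pts, hginj, hpts0, hptslast, hptslt, fun j => ?_⟩
    obtain ⟨h1, h2, h3, h4⟩ := hgcond j
    exact ⟨h1, h2, fun i' hne hli hxi => h3 i' (Finset.mem_univ i') hne hli hxi, h4⟩
end

section
/- If in a metric space with points s, t and agent positions p_1, …, p_k with budgets B_1, …, B_k there exists a feasible returning delivery schedule (a sequence of agents i_1, …, i_ℓ and handover points x_0 = s, x_1, …, x_ℓ = t such that d(p_{i_j}, x_{j−1}) + d(x_{j−1}, x_j) + d(x_j, p_{i_j}) ≤ B_{i_j} for all j), then the balls B(p_{i_j}, B_{i_j}/2) together with the degenerate balls {s} and {t} form a connected chain: d(p_{i_1}, s) ≤ B_{i_1}/2, d(p_{i_ℓ}, t) ≤ B_{i_ℓ}/2, and consecutive balls intersect, i.e. for each j < ℓ, d(p_{i_j}, p_{i_{j+1}}) ≤ B_{i_j}/2 + B_{i_{j+1}}/2. -/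
/-- A feasible returning delivery schedule induces a connected
chain of balls: if agents `a 0, …, a (ℓ-1)` with handover points
`x 0 = s, …, x ℓ = t` satisfy the returning-tour budget constraints, then
`dist (p (a 0)) s ≤ B (a 0) / 2`, `dist (p (a (ℓ-1))) t ≤ B (a (ℓ-1)) / 2`, and
consecutive balls intersect:
`dist (p (a j)) (p (a (j+1))) ≤ B (a j) / 2 + B (a (j+1)) / 2`. -/
theorem feasible_schedule_gives_ball_chain {X : Type*} [MetricSpace X]
    (k ℓ : ℕ) (hℓ : 0 < ℓ) (s t : X)
    (p : Fin k → X) (B : Fin k → ℝ)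
    (a : Fin ℓ → Fin k) (x : Fin (ℓ + 1) → X)
    (hx0 : x 0 = s) (hxl : x (Fin.last ℓ) = t)
    (hfeas : ∀ j : Fin ℓ,
      dist (p (a j)) (x j.castSucc) + dist (x j.castSucc) (x j.succ) +
        dist (x j.succ) (p (a j)) ≤ B (a j)) :
    dist (p (a ⟨0, hℓ⟩)) s ≤ B (a ⟨0, hℓ⟩) / 2 ∧
    dist (p (a ⟨ℓ - 1, Nat.sub_lt hℓ one_pos⟩)) t ≤ B (a ⟨ℓ - 1, Nat.sub_lt hℓ one_pos⟩) / 2 ∧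
    (∀ (j : ℕ) (hj : j + 1 < ℓ),
      dist (p (a ⟨j, Nat.lt_of_succ_lt hj⟩)) (p (a ⟨j + 1, hj⟩))
        ≤ B (a ⟨j, Nat.lt_of_succ_lt hj⟩) / 2 + B (a ⟨j + 1, hj⟩) / 2) := by

  have key : ∀ j : Fin ℓ, dist (p (a j)) (x j.castSucc) ≤ B (a j) / 2 ∧
      dist (p (a j)) (x j.succ) ≤ B (a j) / 2 := by
    intro j
    have h := hfeas j
    have t1 := dist_triangle (p (a j)) (x j.succ) (x j.castSucc)
    have t2 := dist_triangle (p (a j)) (x j.castSucc) (x j.succ)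
    have e1 : dist (x j.succ) (x j.castSucc) = dist (x j.castSucc) (x j.succ) :=
      dist_comm _ _
    have e2 : dist (p (a j)) (x j.succ) = dist (x j.succ) (p (a j)) := dist_comm _ _
    constructor <;> linarith
  refine ⟨?_, ?_, ?_⟩
  · have := (key ⟨0, hℓ⟩).1
    have hc : (⟨0, hℓ⟩ : Fin ℓ).castSucc = 0 := rfl
    rwa [hc, hx0] at this
  · have := (key ⟨ℓ - 1, Nat.sub_lt hℓ one_pos⟩).2
    have hc : (⟨ℓ - 1, Nat.sub_lt hℓ one_pos⟩ : Fin ℓ).succ = Fin.last ℓ := by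
      ext; exact Nat.succ_pred_eq_of_pos hℓ
    rwa [hc, hxl] at this
  · intro j hj
    have h1 := (key ⟨j, Nat.lt_of_succ_lt hj⟩).2
    have h2 := (key ⟨j + 1, hj⟩).1
    have hc : (⟨j, Nat.lt_of_succ_lt hj⟩ : Fin ℓ).succ =
        (⟨j + 1, hj⟩ : Fin ℓ).castSucc := rfl
    rw [hc] at h1
    have t := dist_triangle (p (a ⟨j, Nat.lt_of_succ_lt hj⟩))
      (x (⟨j + 1, hj⟩ : Fin ℓ).castSucc) (p (a ⟨j + 1, hj⟩))
    have e := dist_comm (p (a ⟨j + 1, hj⟩)) (x (⟨j + 1, hj⟩ : Fin ℓ).castSucc)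
    linarith
end

section
/- Let ℓ ≥ 2 and consider agents 1, …, ℓ in a metric space with starting points p_i, budgets B_i, and handover points h_0 = s, h_1, …, h_ℓ = t satisfying d(p_i, h_{i−1}) ≤ B_i/2 and d(p_i, h_i) ≤ B_i/2 for all i (with agent 1 additionally satisfying d(p_1, s) + d(s, h_1) + d(h_1, p_1) ≤ B_1 and symmetrically for agent ℓ). Define the redistributed schedule in which agent i (for 2 ≤ i ≤ ⌊ℓ/2⌋) walks a fraction 2(i−1)/ℓ of the way from p_i towards h_{i−1} (twice), then from p_i to h_i and onward a fraction (ℓ−2i)/ℓ of the way towards p_{i+1}, and back. Then the energy used by agent i is at most (2(i−1)/ℓ)·B_i + B_i + ((ℓ−2i)/ℓ)·B_{i+1} ≤ B_i + ((ℓ−2)/ℓ)·max(B_i, B_{i+1}). -/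
/-- Energy bound for the redistributed schedule: agents
`1, …, ℓ` (`ℓ ≥ 2`) in a metric space have starting points `p i`, budgets `B i`
and handover points `h 0 = s, …, h ℓ = t` with `dist (p i) (h (i-1)) ≤ B i / 2`
and `dist (p i) (h i) ≤ B i / 2`.  In the redistributed schedule, agent `i`
(for `2 ≤ i ≤ ⌊ℓ/2⌋`) walks a fraction `2(i-1)/ℓ` of the way from `p i` towards
`h (i-1)` twice, then from `p i` to `h i` and onward a fraction `(ℓ-2i)/ℓ` of
the way towards `p (i+1)`, and back.  Its energy consumption is at most
`(2(i-1)/ℓ)·B i + B i + ((ℓ-2i)/ℓ)·B (i+1) ≤ B i + ((ℓ-2)/ℓ)·max (B i) (B (i+1))`. -/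
theorem redistributed_schedule_energy_bound {X : Type*} [MetricSpace X]
    (ℓ : ℕ) (hℓ : 2 ≤ ℓ) (p h : ℕ → X) (B : ℕ → ℝ) (hB : ∀ i, 0 ≤ B i)
    (hpick : ∀ i, 1 ≤ i → i ≤ ℓ → dist (p i) (h (i - 1)) ≤ B i / 2)
    (hdrop : ∀ i, 1 ≤ i → i ≤ ℓ → dist (p i) (h i) ≤ B i / 2)
    (i : ℕ) (hi2 : 2 ≤ i) (hiℓ : 2 * i ≤ ℓ) :
    2 * (2 * ((i : ℝ) - 1) / ℓ) * dist (p i) (h (i - 1))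
      + 2 * dist (p i) (h i)
      + 2 * (((ℓ : ℝ) - 2 * i) / ℓ) * dist (h i) (p (i + 1))
      ≤ (2 * ((i : ℝ) - 1) / ℓ) * B i + B i + (((ℓ : ℝ) - 2 * i) / ℓ) * B (i + 1)
    ∧
    (2 * ((i : ℝ) - 1) / ℓ) * B i + B i + (((ℓ : ℝ) - 2 * i) / ℓ) * B (i + 1)
      ≤ B i + (((ℓ : ℝ) - 2) / ℓ) * max (B i) (B (i + 1)) := by
  have hℓR : (0:ℝ) < ℓ := by exact_mod_cast Nat.lt_of_lt_of_le (by norm_num) hℓ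
  have hiℓR : 2 * (i:ℝ) ≤ ℓ := by exact_mod_cast hiℓ
  have hi2R : (2:ℝ) ≤ i := by exact_mod_cast hi2
  have hc1 : (0:ℝ) ≤ 2 * ((i : ℝ) - 1) / ℓ := by
    apply div_nonneg <;> linarith
  have hc2 : (0:ℝ) ≤ ((ℓ : ℝ) - 2 * i) / ℓ := by
    apply div_nonneg <;> linarith
  have h1 : dist (p i) (h (i - 1)) ≤ B i / 2 := hpick i (by omega) (by omega)
  have h2 : dist (p i) (h i) ≤ B i / 2 := hdrop i (by omega) (by omega)
  have h3 : dist (h i) (p (i + 1)) ≤ B (i + 1) / 2 := by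
    have := hpick (i + 1) (by omega) (by omega)
    simpa [dist_comm] using this
  constructor
  · have t1 := mul_le_mul_of_nonneg_left h1 hc1
    have t3 := mul_le_mul_of_nonneg_left h3 hc2
    nlinarith [hc1, hc2]
  · have hm1 : B i ≤ max (B i) (B (i + 1)) := le_max_left _ _
    have hm2 : B (i + 1) ≤ max (B i) (B (i + 1)) := le_max_right _ _
    have t1 := mul_le_mul_of_nonneg_left hm1 hc1
    have t2 := mul_le_mul_of_nonneg_left hm2 hc2
    have key : (2 * ((i : ℝ) - 1) / ℓ) + ((ℓ : ℝ) - 2 * i) / ℓ = ((ℓ : ℝ) - 2) / ℓ := by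
      field_simp; ring
    have key' : (2 * ((i : ℝ) - 1) / ℓ) * max (B i) (B (i+1)) + (((ℓ : ℝ) - 2 * i) / ℓ) * max (B i) (B (i+1)) = (((ℓ : ℝ) - 2) / ℓ) * max (B i) (B (i+1)) := by
      rw [← add_mul, key]
    linarith
end

section
/- Consider an L-δ-chain built from consecutive blocks of six δ·2^j-tubes for j = 0, 1, …, m and then j = m, m−1, …, 0, where 6·2^m·δ > L. Then: (a) the total length of the chain is at least L; (b) any agent in an interior block with tube size δ·2^j has budget at most δ·2^j < 6·δ·2^{j−1}, the length of the adjacent block, so it cannot cross the preceding or following block; (c) any agent in the first or last block (tube size δ) can leave the chain by less than 3δ, even with its budget augmented by any factor γ < 3. -/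
/-- Properties of an `L`-`δ`-chain built from consecutive
blocks of six `δ·2^j`-tubes for `j = 0, 1, …, m` and then `j = m, …, 0`, where
`6·2^m·δ > L`: (a) the total length of the chain is at least `L`; (b) an agent
in an interior block has budget at most `δ·2^j < 6·(δ·2^(j-1))`, the length of
an adjacent block, so it cannot cross the preceding or following block; (c) any
agent of the first or last block, having budget at most `δ`, leaves the chain by
less than `3δ` even when its budget is augmented by any factor `γ < 3`. -/
theorem L_delta_chain_properties (L δ : ℝ) (hL : 0 < L) (hδ : 0 < δ)
    (m : ℕ) (hm : L < 6 * 2 ^ m * δ) :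
    L ≤ 2 * ∑ j ∈ Finset.range (m + 1), 6 * 2 ^ j * δ ∧
    (∀ j : ℕ, 1 ≤ j → δ * 2 ^ j < 6 * (δ * 2 ^ (j - 1))) ∧
    (∀ γ : ℝ, 1 ≤ γ → γ < 3 → ∀ b : ℝ, b ≤ δ → γ * b < 3 * δ) := by
  refine ⟨?_, ?_, ?_⟩
  · have h1 : (6 : ℝ) * 2 ^ m * δ ≤ ∑ j ∈ Finset.range (m + 1), 6 * 2 ^ j * δ := by
      refine Finset.single_le_sum (f := fun j => (6 : ℝ) * 2 ^ j * δ) ?_ (Finset.self_mem_range_succ m)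
      intro i _; positivity
    nlinarith [Finset.sum_nonneg (fun i (_ : i ∈ Finset.range (m+1)) => by positivity :
      ∀ i ∈ Finset.range (m+1), (0:ℝ) ≤ 6 * 2 ^ i * δ)]
  · intro j hj
    obtain ⟨k, rfl⟩ := Nat.exists_eq_add_of_le' hj
    simp only [Nat.add_sub_cancel]
    rw [pow_succ]
    have : (0:ℝ) < 2 ^ k := by positivity
    nlinarith
  · intro γ hγ1 hγ3 b hb
    nlinarith
end
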